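/- Let N be a natural number and let ε, δ be real numbers in the open interval (0,1). If N < ln(1/δ)/ln(1/(1−ε)) − 1, then the probability that a Beta(N+1, 1)-distributed random variable exceeds 1−ε is strictly less than 1−δ; that is, ∫_{1−ε}^{1} (N+1)·p^N dp < 1 − δ. -/

import Mathlib

/-! The posterior mass of `[1 - ε, 1]` is exactly `1 - (1 - ε) ^ (N + 1)`, and after taking
logarithms the bound on `N` says precisely that `δ < (1 - ε) ^ (N + 1)`. -/

open Real

theorem integral_natCast_add_one_mul_pow (n : ℕ) (a b : ℝ) :
    ∫ p in a..b, ((n : ℝ) + 1) * p ^ n = b ^ (n + 1) - a ^ (n + 1) := by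
  rw [intervalIntegral.integral_const_mul, integral_pow]
  field_simp

theorem lt_pow_succ_of_lt_log_div_log_sub_one {x δ : ℝ} (hx₀ : 0 < x) (hx₁ : x < 1) (hδ : 0 < δ)
    {n : ℕ} (h : (n : ℝ) < log (1 / δ) / log (1 / x) - 1) : δ < x ^ (n + 1) := by
  have hlog : 0 < log (1 / x) := log_pos (one_lt_one_div hx₀ hx₁)
  have hmul : ((n : ℝ) + 1) * log (1 / x) < log (1 / δ) := by
    rwa [lt_sub_iff_add_lt, lt_div_iff₀ hlog] at h
  rw [one_div, log_inv, one_div, log_inv] at hmul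
  rw [← log_lt_log_iff hδ (pow_pos hx₀ _), log_pow]
  push_cast
  linarith

theorem beta_posterior_confidence_converse
    (N : ℕ) (ε δ : ℝ) (hε : ε ∈ Set.Ioo (0:ℝ) 1) (hδ : δ ∈ Set.Ioo (0:ℝ) 1)
    (hN : (N : ℝ) < Real.log (1/δ) / Real.log (1/(1-ε)) - 1) :
    ∫ p in (1-ε)..1, ((N : ℝ) + 1) * p ^ N < 1 - δ := by
  obtain ⟨hε₀, hε₁⟩ := hε
  have hδ_lt : δ < (1 - ε) ^ (N + 1) :=
    lt_pow_succ_of_lt_log_div_log_sub_one (sub_pos.2 hε₁) (sub_lt_self 1 hε₀) hδ.1 hN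
  rw [integral_natCast_add_one_mul_pow, one_pow]
  linarith
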